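/- Define the polynomial vector fields on ℝ³: e₁ = (1−y)∂ₓ + x∂ᵤ, e₂ = (1−y)∂_y + u∂ᵤ, e₃ = x∂ₓ + 2u∂ᵤ, e₄ = −u∂ₓ + x∂_y (coordinates (x,y,u)). Their Lie brackets satisfy: [e₁,e₂] = e₁, [e₁,e₃] = e₁, [e₁,e₄] = e₂, [e₂,e₃] = 0, [e₂,e₄] = e₄, [e₃,e₄] = e₄. In particular these four vector fields span a 4-dimensional Lie algebra of vector fields on ℝ³. -/

import Mathlib

/-! All four fields are affine, so the derivative of each is the constant linear map
`v ↦ V v - V 0`, and every bracket `[V, W](p) = (W (V p) - W 0) - (V (W p) - V 0)` becomes a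
polynomial identity. Linear independence is read off from the values at `(0, 2, 0)` and
`(1, 0, 0)`. -/

/-- Lie bracket of two vector fields `V, W : ℝ³ → ℝ³`:
`[V,W](p) = DW(p)·V(p) − DV(p)·W(p)`. -/
noncomputable def lieBracket (V W : ℝ × ℝ × ℝ → ℝ × ℝ × ℝ) : ℝ × ℝ × ℝ → ℝ × ℝ × ℝ :=
  fun p => fderiv ℝ W p (V p) - fderiv ℝ V p (W p)

/-- `e₁ = (1−y)∂ₓ + x∂ᵤ`. -/
noncomputable def e1Flat : ℝ × ℝ × ℝ → ℝ × ℝ × ℝ := fun p => (1 - p.2.1, 0, p.1)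

/-- `e₂ = (1−y)∂_y + u∂ᵤ`. -/
noncomputable def e2Flat : ℝ × ℝ × ℝ → ℝ × ℝ × ℝ := fun p => (0, 1 - p.2.1, p.2.2)

/-- `e₃ = x∂ₓ + 2u∂ᵤ`. -/
noncomputable def e3Flat : ℝ × ℝ × ℝ → ℝ × ℝ × ℝ := fun p => (p.1, 0, 2 * p.2.2)

/-- `e₄ = −u∂ₓ + x∂_y`. -/
noncomputable def e4Flat : ℝ × ℝ × ℝ → ℝ × ℝ × ℝ := fun p => (-p.2.2, p.1, 0)

section AffineField

variable {E F : Type*} [NormedAddCommGroup E] [NormedSpace ℝ E]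
  [NormedAddCommGroup F] [NormedSpace ℝ F]

def IsContinuousAffine (f : E → F) : Prop :=
  Continuous f ∧ ∀ p v, f (p + v) = f p + (f v - f 0)

theorem IsContinuousAffine.fderiv_apply {f : E → F} (hf : IsContinuousAffine f) (p v : E) :
    fderiv ℝ f p v = f v - f 0 := by
  obtain ⟨hcont, hadd⟩ := hf
  let L : E →+ F :=
    { toFun := fun v => f v - f 0
      map_zero' := sub_self _
      map_add' := fun v w => by simp only [hadd v w]; abel }
  have hL : Continuous L := hcont.sub continuous_const
  have hf_eq : f = fun q => f 0 + L.toRealLinearMap hL q := by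
    funext q
    simp [L]
  rw [hf_eq, fderiv_const_add, (L.toRealLinearMap hL).fderiv]
  simp [L]

end AffineField

theorem lieBracket_of_isContinuousAffine {V W : ℝ × ℝ × ℝ → ℝ × ℝ × ℝ}
    (hV : IsContinuousAffine V) (hW : IsContinuousAffine W) (p : ℝ × ℝ × ℝ) :
    lieBracket V W p = (W (V p) - W 0) - (V (W p) - V 0) := by
  rw [lieBracket, hV.fderiv_apply, hW.fderiv_apply]

theorem isContinuousAffine_e1Flat : IsContinuousAffine e1Flat :=
  ⟨by unfold e1Flat; fun_prop, fun p v => by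
    ext <;> simp only [e1Flat, Prod.fst_add, Prod.snd_add, Prod.fst_sub, Prod.snd_sub,
      Prod.fst_zero, Prod.snd_zero] <;> ring⟩

theorem isContinuousAffine_e2Flat : IsContinuousAffine e2Flat :=
  ⟨by unfold e2Flat; fun_prop, fun p v => by
    ext <;> simp only [e2Flat, Prod.fst_add, Prod.snd_add, Prod.fst_sub, Prod.snd_sub,
      Prod.fst_zero, Prod.snd_zero] <;> ring⟩

theorem isContinuousAffine_e3Flat : IsContinuousAffine e3Flat :=
  ⟨by unfold e3Flat; fun_prop, fun p v => by
    ext <;> simp only [e3Flat, Prod.fst_add, Prod.snd_add, Prod.fst_sub, Prod.snd_sub,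
      Prod.fst_zero, Prod.snd_zero] <;> ring⟩

theorem isContinuousAffine_e4Flat : IsContinuousAffine e4Flat :=
  ⟨by unfold e4Flat; fun_prop, fun p v => by
    ext <;> simp only [e4Flat, Prod.fst_add, Prod.snd_add, Prod.fst_sub, Prod.snd_sub,
      Prod.fst_zero, Prod.snd_zero] <;> ring⟩

theorem linearIndependent_flatFields :
    LinearIndependent ℝ ![e1Flat, e2Flat, e3Flat, e4Flat] := by
  rw [Fintype.linearIndependent_iff]
  intro c hc
  -- at `(0, 2, 0)` only `e₁ = -∂ₓ` and `e₂ = -∂_y` are nonzero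
  obtain ⟨hc₀, hc₁⟩ : c 0 = 0 ∧ c 1 = 0 := by
    simpa [Fin.sum_univ_four, e1Flat, e2Flat, e3Flat, e4Flat, sub_eq_zero] using
      congrFun hc (0, 2, 0)
  obtain ⟨hc₀₂, hc₁₃, -⟩ : c 0 + c 2 = 0 ∧ c 1 + c 3 = 0 ∧ c 0 = 0 := by
    simpa [Fin.sum_univ_four, e1Flat, e2Flat, e3Flat, e4Flat] using congrFun hc (1, 0, 0)
  intro i
  fin_cases i <;> simp <;> linarith

/-- The bracket relations `[e₁,e₂] = e₁`, `[e₁,e₃] = e₁`, `[e₁,e₄] = e₂`, `[e₂,e₃] = 0`,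
`[e₂,e₄] = e₄`, `[e₃,e₄] = e₄`; in particular `e₁,…,e₄` span a 4-dimensional Lie algebra
of vector fields on `ℝ³`. -/
theorem flat_model_symmetry_algebra :
    (∀ p, lieBracket e1Flat e2Flat p = e1Flat p) ∧
    (∀ p, lieBracket e1Flat e3Flat p = e1Flat p) ∧
    (∀ p, lieBracket e1Flat e4Flat p = e2Flat p) ∧
    (∀ p, lieBracket e2Flat e3Flat p = 0) ∧
    (∀ p, lieBracket e2Flat e4Flat p = e4Flat p) ∧
    (∀ p, lieBracket e3Flat e4Flat p = e4Flat p) ∧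
    LinearIndependent ℝ ![e1Flat, e2Flat, e3Flat, e4Flat] := by
  have h₁ := isContinuousAffine_e1Flat
  have h₂ := isContinuousAffine_e2Flat
  have h₃ := isContinuousAffine_e3Flat
  have h₄ := isContinuousAffine_e4Flat
  refine ⟨fun p => ?_, fun p => ?_, fun p => ?_, fun p => ?_, fun p => ?_, fun p => ?_,
    linearIndependent_flatFields⟩
  all_goals
    rw [lieBracket_of_isContinuousAffine (by assumption) (by assumption)]
    ext <;> simp only [e1Flat, e2Flat, e3Flat, e4Flat, Prod.fst_sub, Prod.snd_sub, Prod.fst_zero,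
      Prod.snd_zero] <;> ring
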